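/- arXiv:2510.21078 — 4 statements merged into one kernel-verified Lean document; each statement's English description precedes it below -/
import Mathlib

section
/- For every z ∈ ℝ^K with ‖z‖ ≤ 1/4, the softmax vector satisfies ‖softmax(z) − (1/K)·1‖ ≤ (8/√K)·‖z‖. -/
/-!
Write `x = exp z - 1` coordinatewise and `S = ∑ exp z_l`. Then `softmax z - (1/K)·𝟙` is the
centred vector `x - mean(x)·𝟙` divided by `S`, and centring does not increase the Euclidean norm.
For `‖z‖ ≤ 1` we have `|exp z_k - 1| ≤ 2|z_k|`, so `‖x‖ ≤ 2‖z‖`, while `exp z_l ≥ 1 + z_l ≥ 3/4`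
gives `S ≥ 3K/4 ≥ √K/4`.
-/

open scoped RealInnerProductSpace
open Finset

noncomputable section

/-- The softmax function on `ℝ^K`. -/
def softmax {K : ℕ} (z : EuclideanSpace ℝ (Fin K)) : EuclideanSpace ℝ (Fin K) :=
  WithLp.toLp 2 (fun k => Real.exp (z k) / ∑ l, Real.exp (z l))

/-- The vector `(1/K)·𝟙 ∈ ℝ^K` (the all-ones vector scaled by `1/K`). -/
def uniformVec (K : ℕ) : EuclideanSpace ℝ (Fin K) :=
  WithLp.toLp 2 (fun _ => 1 / (K : ℝ))

theorem Finset.sum_sub_mean_sq_le_sum_sq {ι : Type*} (s : Finset ι) (f : ι → ℝ) :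
    ∑ i ∈ s, (f i - (∑ j ∈ s, f j) / #s) ^ 2 ≤ ∑ i ∈ s, f i ^ 2 := by
  rcases s.eq_empty_or_nonempty with rfl | hs
  · simp
  have hcard : (#s : ℝ) ≠ 0 := by exact_mod_cast hs.card_ne_zero
  have hexpand : ∑ i ∈ s, (f i - (∑ j ∈ s, f j) / #s) ^ 2
      = ∑ i ∈ s, f i ^ 2 - (∑ j ∈ s, f j) ^ 2 / #s := by
    simp only [sub_sq, sum_add_distrib, sum_sub_distrib, sum_const, nsmul_eq_mul, ← sum_mul,
      ← mul_sum]
    field_simp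
    ring
  rw [hexpand]
  exact sub_le_self _ (by positivity)

section EuclideanSpace

variable {ι : Type*} [Fintype ι]

theorem sum_exp_sub_one_sq_le (z : EuclideanSpace ℝ ι) (hz : ‖z‖ ≤ 1) :
    ∑ i, (Real.exp (z i) - 1) ^ 2 ≤ 4 * ‖z‖ ^ 2 := by
  rw [EuclideanSpace.real_norm_sq_eq, mul_sum]
  refine sum_le_sum fun i _ => ?_
  have hzi : |z i| ≤ 1 := (PiLp.norm_apply_le z i).trans hz
  calc (Real.exp (z i) - 1) ^ 2 = |Real.exp (z i) - 1| ^ 2 := (sq_abs _).symm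
    _ ≤ (2 * |z i|) ^ 2 := by gcongr; exact Real.abs_exp_sub_one_le hzi
    _ = 4 * z i ^ 2 := by rw [mul_pow, sq_abs]; norm_num

theorem one_sub_norm_mul_card_le_sum_exp (z : EuclideanSpace ℝ ι) :
    (1 - ‖z‖) * Fintype.card ι ≤ ∑ i, Real.exp (z i) := by
  rw [mul_comm, ← nsmul_eq_mul, ← card_univ, ← sum_const]
  refine sum_le_sum fun i _ => ?_
  have hzi : -‖z‖ ≤ z i := neg_le_of_abs_le (PiLp.norm_apply_le z i)
  linarith [Real.add_one_le_exp (z i)]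

end EuclideanSpace

section Softmax

variable {K : ℕ}

theorem softmax_sub_uniformVec_apply (z : EuclideanSpace ℝ (Fin K)) (k : Fin K) :
    (softmax z - uniformVec K) k =
      (Real.exp (z k) - 1 - (∑ l, (Real.exp (z l) - 1)) / K) / ∑ l, Real.exp (z l) := by
  have hK : (K : ℝ) ≠ 0 := by exact_mod_cast (Fin.pos k).ne'
  have hS : ∑ l, Real.exp (z l) ≠ 0 :=
    (sum_pos (fun l _ => Real.exp_pos (z l)) ⟨k, mem_univ k⟩).ne'
  simp only [softmax, uniformVec, PiLp.sub_apply, sum_sub_distrib, sum_const, card_univ,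
    Fintype.card_fin, nsmul_eq_mul, mul_one]
  field_simp
  ring

theorem norm_softmax_sub_uniformVec_le (z : EuclideanSpace ℝ (Fin K)) (hz : ‖z‖ ≤ 1) :
    ‖softmax z - uniformVec K‖ ≤ 2 * ‖z‖ / ∑ l, Real.exp (z l) := by
  set S := ∑ l, Real.exp (z l)
  have hS : 0 ≤ S := sum_nonneg fun l _ => (Real.exp_pos (z l)).le
  refine (pow_le_pow_iff_left₀ (norm_nonneg _) (by positivity) two_ne_zero).mp ?_
  calc ‖softmax z - uniformVec K‖ ^ 2
      = (∑ k, (Real.exp (z k) - 1 - (∑ l, (Real.exp (z l) - 1)) / K) ^ 2) / S ^ 2 := by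
        simp only [EuclideanSpace.real_norm_sq_eq, softmax_sub_uniformVec_apply, div_pow,
          ← sum_div, S]
    _ ≤ (∑ k, (Real.exp (z k) - 1) ^ 2) / S ^ 2 := by
        gcongr ?_ / _
        simpa using sum_sub_mean_sq_le_sum_sq univ (fun k => Real.exp (z k) - 1)
    _ ≤ 4 * ‖z‖ ^ 2 / S ^ 2 := by gcongr; exact sum_exp_sub_one_sq_le z hz
    _ = (2 * ‖z‖ / S) ^ 2 := by ring

end Softmax

/-- For every `z ∈ ℝ^K` with `‖z‖ ≤ 1/4`,
`‖softmax z − (1/K)·𝟙‖ ≤ (8/√K)·‖z‖`. -/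
theorem softmax_near_uniform (K : ℕ) (hK : 1 ≤ K)
    (z : EuclideanSpace ℝ (Fin K)) (hz : ‖z‖ ≤ 1 / 4) :
    ‖softmax z - uniformVec K‖ ≤ 8 / Real.sqrt (K : ℝ) * ‖z‖ := by
  have hKreal : (1 : ℝ) ≤ K := by exact_mod_cast hK
  have hS : Real.sqrt K / 4 ≤ ∑ l, Real.exp (z l) :=
    calc Real.sqrt K / 4 ≤ K / 4 := by gcongr; exact Real.sqrt_le_self_iff.mpr (Or.inr hKreal)
      _ ≤ (1 - ‖z‖) * K := by nlinarith
      _ ≤ ∑ l, Real.exp (z l) := by simpa using one_sub_norm_mul_card_le_sum_exp z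
  calc ‖softmax z - uniformVec K‖ ≤ 2 * ‖z‖ / ∑ l, Real.exp (z l) :=
        norm_softmax_sub_uniformVec_le z (by linarith)
    _ ≤ 2 * ‖z‖ / (Real.sqrt K / 4) := by gcongr
    _ = 8 / Real.sqrt K * ‖z‖ := by ring

end
end

section
/- Let {x_i}_{i∈I} be a finite nonempty family of nonzero vectors in ℝ^D satisfying ⟨x_i, x_j⟩ ≥ μ_s‖x_i‖‖x_j‖ for all i, j ∈ I, where 0 < μ_s ≤ 1, and let X_min = min_{i∈I}‖x_i‖. Then for any nonnegative reals a_i (i ∈ I): ‖Σ_{i∈I} a_i x_i‖ ≥ √μ_s · X_min · Σ_{i∈I} a_i. -/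
open scoped RealInnerProductSpace
open Finset

/-- For a finite nonempty family of nonzero vectors with pairwise
correlation at least `μ_s` (relative to norms), any nonnegative combination satisfies
`‖Σ a_i x_i‖ ≥ √μ_s · X_min · Σ a_i`. -/
theorem norm_nonneg_combination_lower_bound
    (D : ℕ) (I : Type*) [Fintype I] [Nonempty I]
    (x : I → EuclideanSpace ℝ (Fin D)) (hx : ∀ i, x i ≠ 0)
    (μs : ℝ) (hμs0 : 0 < μs) (hμs1 : μs ≤ 1)
    (hsep : ∀ i j : I, μs * ‖x i‖ * ‖x j‖ ≤ ⟪x i, x j⟫)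
    (Xmin : ℝ) (hXmin : IsLeast (Set.range fun i => ‖x i‖) Xmin)
    (a : I → ℝ) (ha : ∀ i, 0 ≤ a i) :
    Real.sqrt μs * Xmin * ∑ i, a i ≤ ‖∑ i, a i • x i‖ := by
  have hXmin0 : 0 ≤ Xmin := by
    obtain ⟨⟨i, hi⟩, _⟩ := hXmin
    rw [← hi]; exact norm_nonneg _
  have hXle : ∀ i, Xmin ≤ ‖x i‖ := fun i => hXmin.2 ⟨i, rfl⟩
  have hS : 0 ≤ ∑ i, a i := Finset.sum_nonneg fun i _ => ha i
  have hL0 : 0 ≤ Real.sqrt μs * Xmin * ∑ i, a i :=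
    mul_nonneg (mul_nonneg (Real.sqrt_nonneg _) hXmin0) hS
  have hsq : (Real.sqrt μs * Xmin * ∑ i, a i) ^ 2 ≤ ‖∑ i, a i • x i‖ ^ 2 := by
    have hnorm : ‖∑ i, a i • x i‖ ^ 2 = ∑ i, ∑ j, a i * a j * ⟪x i, x j⟫ := by
      rw [← real_inner_self_eq_norm_sq, sum_inner]
      refine Finset.sum_congr rfl fun i _ => ?_
      rw [inner_sum]
      refine Finset.sum_congr rfl fun j _ => ?_
      rw [real_inner_smul_left, real_inner_smul_right]; ring
    rw [hnorm]
    have h1 : μs * (∑ i, a i * ‖x i‖) ^ 2 ≤ ∑ i, ∑ j, a i * a j * ⟪x i, x j⟫ := by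
      rw [sq, Finset.sum_mul_sum, Finset.mul_sum]
      refine Finset.sum_le_sum fun i _ => ?_
      rw [Finset.mul_sum]
      refine Finset.sum_le_sum fun j _ => ?_
      have := hsep i j
      have h2 : μs * (a i * ‖x i‖ * (a j * ‖x j‖)) =
          a i * a j * (μs * ‖x i‖ * ‖x j‖) := by ring
      rw [h2]
      exact mul_le_mul_of_nonneg_left this (mul_nonneg (ha i) (ha j))
    refine le_trans ?_ h1
    have h3 : Xmin * ∑ i, a i ≤ ∑ i, a i * ‖x i‖ := by
      rw [Finset.mul_sum]
      refine Finset.sum_le_sum fun i _ => ?_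
      rw [mul_comm Xmin]
      exact mul_le_mul_of_nonneg_left (hXle i) (ha i)
    have h4 : (Xmin * ∑ i, a i) ^ 2 ≤ (∑ i, a i * ‖x i‖) ^ 2 :=
      pow_le_pow_left₀ (mul_nonneg hXmin0 hS) h3 2
    calc (Real.sqrt μs * Xmin * ∑ i, a i) ^ 2
        = μs * (Xmin * ∑ i, a i) ^ 2 := by
          rw [mul_assoc, mul_pow, Real.sq_sqrt hμs0.le]
      _ ≤ μs * (∑ i, a i * ‖x i‖) ^ 2 := by
          exact mul_le_mul_of_nonneg_left h4 hμs0.le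
  calc Real.sqrt μs * Xmin * ∑ i, a i
      = Real.sqrt ((Real.sqrt μs * Xmin * ∑ i, a i) ^ 2) := (Real.sqrt_sq hL0).symm
    _ ≤ Real.sqrt (‖∑ i, a i • x i‖ ^ 2) := Real.sqrt_le_sqrt hsq
    _ = ‖∑ i, a i • x i‖ := Real.sqrt_sq (norm_nonneg _)
end

section
/- Given a dataset satisfying orthogonal separability, there exists ζ ∈ (0,1) such that for every class k ∈ {1,…,K} and every nonzero w ∈ ℝ^D with 0 < |I_k^w| < |I_k| (where I_k^w = {i ∈ I_k : ⟨x_i, w⟩ > 0}): ‖Σ_{i∈I_k^w} x_i‖² − ( Σ_{i∈I_k^w} ⟨x_i, w/‖w‖⟩ )² ≥ μ_s · X_min² · ζ. -/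
open scoped RealInnerProductSpace Classical
open Finset

noncomputable section

/-- For orthogonally separable data, there is a `ζ ∈ (0,1)` such that for
every class `k` and every nonzero `w` whose active set within class `k` is a proper nonempty
subset of class `k`, the quantity
`‖Σ_{i ∈ I_k^w} x_i‖² − (Σ_{i ∈ I_k^w} ⟨x_i, w/‖w‖⟩)²` is at least `μ_s · X_min² · ζ`. -/
theorem exists_zeta_active_gap
    (D n K : ℕ)
    (x : Fin n → EuclideanSpace ℝ (Fin D)) (hx : ∀ i, x i ≠ 0)
    (cls : Fin n → Fin K) (hcls : ∀ k, ∃ i, cls i = k)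
    (Xmin : ℝ) (hXmin : IsLeast (Set.range fun i => ‖x i‖) Xmin)
    (μs μd : ℝ) (hμs0 : 0 < μs) (hμs1 : μs ≤ 1) (hμd0 : 0 < μd)
    (hseps : ∀ i j, cls i = cls j → μs * ‖x i‖ * ‖x j‖ ≤ ⟪x i, x j⟫)
    (hsepd : ∀ i j, cls i ≠ cls j → ⟪x i, x j⟫ ≤ -(μd * ‖x i‖ * ‖x j‖)) :
    ∃ ζ : ℝ, 0 < ζ ∧ ζ < 1 ∧
      ∀ (k : Fin K) (w : EuclideanSpace ℝ (Fin D)), w ≠ 0 →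
        0 < (Finset.univ.filter fun i => cls i = k ∧ 0 < ⟪x i, w⟫).card →
        (Finset.univ.filter fun i => cls i = k ∧ 0 < ⟪x i, w⟫).card <
          (Finset.univ.filter fun i => cls i = k).card →
        μs * Xmin ^ 2 * ζ ≤
          ‖∑ i ∈ Finset.univ.filter fun i => cls i = k ∧ 0 < ⟪x i, w⟫, x i‖ ^ 2 -
            (∑ i ∈ Finset.univ.filter fun i => cls i = k ∧ 0 < ⟪x i, w⟫,
              ‖w‖⁻¹ * ⟪x i, w⟫) ^ 2 := by
  refine ⟨μs / 2, by linarith, by linarith, ?_⟩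
  intro k w hw hpos hlt
  set S : Finset (Fin n) := Finset.univ.filter fun i => cls i = k ∧ 0 < ⟪x i, w⟫ with hSdef
  set v : EuclideanSpace ℝ (Fin D) := ∑ i ∈ S, x i with hv
  have hwn : (0 : ℝ) < ‖w‖ := norm_pos_iff.mpr hw
  set u : EuclideanSpace ℝ (Fin D) := ‖w‖⁻¹ • w with hu
  have hun : ‖u‖ = 1 := by
    rw [hu, norm_smul, norm_inv, norm_norm, inv_mul_cancel₀ (ne_of_gt hwn)]
  set c : ℝ := ∑ i ∈ S, ‖w‖⁻¹ * ⟪x i, w⟫ with hc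
  have hc0 : 0 ≤ c := by
    apply Finset.sum_nonneg
    intro i hi
    have h := (Finset.mem_filter.mp hi).2.2
    positivity
  have hcv : c = ⟪v, u⟫ := by
    rw [hv, hu, sum_inner]
    exact Finset.sum_congr rfl fun i _ => by rw [real_inner_smul_right]
  -- Xmin facts
  obtain ⟨i0, hi0⟩ := hXmin.1
  have hXmin0 : 0 ≤ Xmin := hi0 ▸ norm_nonneg _
  have hXle : ∀ i, Xmin ≤ ‖x i‖ := fun i => hXmin.2 ⟨i, rfl⟩
  -- find j in class k with ⟪x j, w⟫ ≤ 0
  have hsub : S ⊆ Finset.univ.filter fun i => cls i = k := by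
    intro i hi
    rcases Finset.mem_filter.mp hi with ⟨_, h1, _⟩
    exact Finset.mem_filter.mpr ⟨Finset.mem_univ i, h1⟩
  have hss : S ⊂ Finset.univ.filter fun i => cls i = k :=
    hsub.ssubset_of_ne (by
      intro h
      exact hlt.ne (by rw [h]))
  obtain ⟨j, hjmem, hjnot⟩ := Finset.exists_of_ssubset hss
  have hjk : cls j = k := (Finset.mem_filter.mp hjmem).2
  have hjw : ⟪x j, w⟫ ≤ 0 := by
    by_contra h
    exact hjnot (Finset.mem_filter.mpr ⟨Finset.mem_univ j, hjk, lt_of_not_ge h⟩)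
  have hxj : (0 : ℝ) < ‖x j‖ := norm_pos_iff.mpr (hx j)
  -- lower bound ⟪v, x j⟫
  obtain ⟨i1, hi1⟩ := Finset.card_pos.mp hpos
  have hsum : μs * Xmin * ‖x j‖ ≤ ⟪v, x j⟫ := by
    rw [hv, sum_inner]
    have hterm : ∀ i ∈ S, μs * Xmin * ‖x j‖ ≤ ⟪x i, x j⟫ := by
      intro i hi
      have hik : cls i = k := (Finset.mem_filter.mp hi).2.1
      have := hseps i j (by rw [hik, hjk])
      have h2 := mul_le_mul_of_nonneg_right
        (mul_le_mul_of_nonneg_left (hXle i) hμs0.le) (norm_nonneg (x j))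
      linarith
    calc μs * Xmin * ‖x j‖ ≤ ⟪x i1, x j⟫ := hterm i1 hi1
      _ ≤ ∑ i ∈ S, ⟪x i, x j⟫ := by
          apply Finset.single_le_sum (fun i hi => ?_) hi1
          have h3 := hterm i hi
          have h4 : (0:ℝ) ≤ μs * Xmin * ‖x j‖ := by positivity
          linarith
  -- the orthogonal component
  set p : EuclideanSpace ℝ (Fin D) := v - c • u with hp
  have hgap : ‖p‖ ^ 2 = ‖v‖ ^ 2 - c ^ 2 := by
    rw [hp, norm_sub_sq_real, real_inner_smul_right, ← hcv, norm_smul, mul_pow]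
    rw [hun]
    simp [Real.norm_eq_abs, sq_abs]
    ring
  have hpw : ⟪u, x j⟫ ≤ 0 := by
    rw [hu, real_inner_smul_left, real_inner_comm]
    exact mul_nonpos_of_nonneg_of_nonpos (by positivity) hjw
  have hpx : μs * Xmin * ‖x j‖ ≤ ⟪p, x j⟫ := by
    rw [hp, inner_sub_left, real_inner_smul_left]
    have h5 := mul_nonpos_of_nonneg_of_nonpos hc0 hpw
    linarith
  have hcs : ⟪p, x j⟫ ≤ ‖p‖ * ‖x j‖ := real_inner_le_norm p (x j)
  have hpn : μs * Xmin ≤ ‖p‖ :=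
    le_of_mul_le_mul_right (le_trans hpx hcs) hxj
  have hfin : μs * Xmin ^ 2 * (μs / 2) ≤ ‖p‖ ^ 2 := by
    have h1 : (μs * Xmin) ^ 2 ≤ ‖p‖ ^ 2 :=
      pow_le_pow_left₀ (mul_nonneg hμs0.le hXmin0) hpn 2
    have h2 : μs * Xmin ^ 2 * (μs / 2) = (μs * Xmin) ^ 2 / 2 := by ring
    have h3 : (0:ℝ) ≤ (μs * Xmin) ^ 2 := sq_nonneg _
    linarith
  rw [hgap] at hfin
  exact hfin
end
end

section
/- Let {x_i}_{i∈I} be a finite nonempty family of nonzero vectors in ℝ^D satisfying ⟨x_i, x_j⟩ ≥ μ_s‖x_i‖‖x_j‖ for all i, j ∈ I, where 0 < μ_s ≤ 1, and let X_min = min_{i∈I}‖x_i‖. If u ∈ ℝ^D is a unit vector of the form u = Σ_{i∈I} a_i x_i with a_i ≥ 0 for all i ∈ I, then ⟨u, x_i⟩ ≥ μ_s X_min for every i ∈ I. In particular, the maximum margin γ = max_{‖u‖=1} min_{i∈I} ⟨x_i, u⟩ satisfies γ ≥ μ_s X_min. -/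
open scoped RealInnerProductSpace
open Finset

/-- For a finite nonempty family of nonzero, pairwise `μ_s`-positively
correlated vectors: any unit vector which is a nonnegative combination of the `x_i` has margin
at least `μ_s·X_min` on every `x_i`; in particular the maximum margin
`γ = max_{‖u‖=1} min_i ⟨x_i, u⟩` satisfies `γ ≥ μ_s·X_min`. -/
theorem margin_lower_bound_of_positive_correlation
    (D : ℕ) (I : Type*) [Fintype I] [Nonempty I]
    (x : I → EuclideanSpace ℝ (Fin D)) (hx : ∀ i, x i ≠ 0)
    (μs : ℝ) (hμs0 : 0 < μs) (hμs1 : μs ≤ 1)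
    (hsep : ∀ i j : I, μs * ‖x i‖ * ‖x j‖ ≤ ⟪x i, x j⟫)
    (Xmin : ℝ) (hXmin : IsLeast (Set.range fun i => ‖x i‖) Xmin) :
    (∀ (u : EuclideanSpace ℝ (Fin D)) (a : I → ℝ), ‖u‖ = 1 → (∀ i, 0 ≤ a i) →
      u = ∑ i, a i • x i → ∀ i, μs * Xmin ≤ ⟪u, x i⟫) ∧
    μs * Xmin ≤
      sSup {g : ℝ | ∃ u : EuclideanSpace ℝ (Fin D), ‖u‖ = 1 ∧ g = ⨅ i, ⟪x i, u⟫} := by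
  have hXmin_le : ∀ i, Xmin ≤ ‖x i‖ := fun i => hXmin.2 ⟨i, rfl⟩
  constructor
  · intro u a hu ha heq i
    have key : μs * ‖x i‖ ≤ ⟪u, x i⟫ := by
      have h1 : ⟪u, x i⟫ = ∑ j, a j * ⟪x j, x i⟫ := by
        rw [heq, sum_inner]
        simp [real_inner_smul_left, Finset.mul_sum, mul_assoc]
      have h2 : ∑ j, a j * (μs * ‖x j‖ * ‖x i‖) ≤ ∑ j, a j * ⟪x j, x i⟫ :=
        Finset.sum_le_sum fun j _ =>
          mul_le_mul_of_nonneg_left (hsep j i) (ha j)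
      have h3 : ‖u‖ ≤ ∑ j, a j * ‖x j‖ := by
        rw [heq]
        calc ‖∑ j, a j • x j‖ ≤ ∑ j, ‖a j • x j‖ := norm_sum_le _ _
          _ = ∑ j, a j * ‖x j‖ := by
              refine Finset.sum_congr rfl fun j _ => ?_
              rw [norm_smul, Real.norm_of_nonneg (ha j)]
      have h4 : μs * ‖x i‖ * 1 ≤ μs * ‖x i‖ * (∑ j, a j * ‖x j‖) := by
        refine mul_le_mul_of_nonneg_left ?_ (by positivity)
        rw [← hu]; exact hu ▸ h3
      calc μs * ‖x i‖ = μs * ‖x i‖ * 1 := by ring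
        _ ≤ μs * ‖x i‖ * (∑ j, a j * ‖x j‖) := h4
        _ = ∑ j, a j * (μs * ‖x j‖ * ‖x i‖) := by
            rw [Finset.mul_sum]; exact Finset.sum_congr rfl fun j _ => by ring
        _ ≤ ∑ j, a j * ⟪x j, x i⟫ := h2
        _ = ⟪u, x i⟫ := h1.symm
    calc μs * Xmin ≤ μs * ‖x i‖ :=
          mul_le_mul_of_nonneg_left (hXmin_le i) hμs0.le
      _ ≤ ⟪u, x i⟫ := key
  · obtain ⟨i₀, hi₀⟩ := hXmin.1
    set u : EuclideanSpace ℝ (Fin D) := ‖x i₀‖⁻¹ • x i₀ with hudef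
    have hni₀ : ‖x i₀‖ ≠ 0 := norm_ne_zero_iff.mpr (hx i₀)
    have hu : ‖u‖ = 1 := by
      rw [hudef, norm_smul, norm_inv, norm_norm, inv_mul_cancel₀ hni₀]
    have hbdd : BddAbove {g : ℝ | ∃ u : EuclideanSpace ℝ (Fin D),
        ‖u‖ = 1 ∧ g = ⨅ i, ⟪x i, u⟫} := by
      refine ⟨‖x i₀‖, ?_⟩
      rintro g ⟨v, hv, rfl⟩
      refine le_trans (ciInf_le (Finite.bddBelow_range _) i₀) ?_
      calc ⟪x i₀, v⟫ ≤ ‖x i₀‖ * ‖v‖ := real_inner_le_norm _ _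
        _ = ‖x i₀‖ := by rw [hv, mul_one]
    refine le_csSup hbdd ⟨u, hu, rfl⟩ |>.trans' ?_
    refine le_ciInf fun i => ?_
    have : ⟪x i, u⟫ = ‖x i₀‖⁻¹ * ⟪x i, x i₀⟫ := by
      rw [hudef, real_inner_smul_right]
    rw [this]
    have h5 : μs * ‖x i‖ * ‖x i₀‖ ≤ ⟪x i, x i₀⟫ := hsep i i₀
    have h6 : μs * Xmin * ‖x i₀‖ ≤ ⟪x i, x i₀⟫ := by
      refine le_trans ?_ h5
      have := mul_le_mul_of_nonneg_left (hXmin_le i) hμs0.le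
      nlinarith [norm_nonneg (x i₀)]
    have hpos : 0 < ‖x i₀‖ := lt_of_le_of_ne (norm_nonneg _) (Ne.symm hni₀)
    rw [le_inv_mul_iff₀ hpos]
    nlinarith [h6]
end
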